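/- Let E be a finite set with symmetric submodular order function. Then there exists a tree-decomposition of E distinguishing any two maximal tangles efficiently such that in each part of the decomposition there lives a maximal tangle. -/

import Mathlib

variable {E : Type*}

/-- `f` is symmetric: `f X = f (E \ X)` for all `X ⊆ E`. -/
def FSymm (f : Set E → ℤ) : Prop := ∀ X : Set E, f X = f Xᶜ

/-- `f` is submodular. -/
def FSubmod (f : Set E → ℤ) : Prop :=
  ∀ X Y : Set E, f (X ∩ Y) + f (X ∪ Y) ≤ f X + f Y

/-- Separations `(A,B)` and `(C,D)` are nested: some side of the first
is contained in some side of the second. -/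
def Nested (A B C D : Set E) : Prop := A ⊆ C ∨ A ⊆ D ∨ B ⊆ C ∨ B ⊆ D

/-- `T` is a tangle of order `k+1`: a set of small sides of separations of
order at most `k`, orienting every separation of order at most `k`, such that
no three small sides cover `E` and the complement of a singleton is never small. -/
def IsTangle (f : Set E → ℤ) (k : ℤ) (T : Set (Set E)) : Prop :=
  (∀ A ∈ T, f A ≤ k) ∧
  (∀ A : Set E, f A ≤ k → A ∈ T ∨ Aᶜ ∈ T) ∧
  (∀ A₁ ∈ T, ∀ A₂ ∈ T, ∀ A₃ ∈ T, A₁ ∪ A₂ ∪ A₃ ≠ Set.univ) ∧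
  (∀ e : E, ({e}ᶜ : Set E) ∉ T)

/-- A tangle is maximal if it is not included in any other tangle. -/
def IsMaximalTangle (f : Set E → ℤ) (T : Set (Set E)) : Prop :=
  (∃ k, IsTangle f k T) ∧
  ∀ T' : Set (Set E), (∃ k, IsTangle f k T') → T ⊆ T' → T' = T

/-- The separation with sides `A`, `Aᶜ` distinguishes the tangles `P` and `Q`. -/
def Distinguishes (A : Set E) (P Q : Set (Set E)) : Prop :=
  (A ∈ P ∧ Aᶜ ∈ Q) ∨ (Aᶜ ∈ P ∧ A ∈ Q)

/-- The separation with sides `A`, `Aᶜ` distinguishes `P` and `Q` efficiently. -/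
def DistinguishesEff (f : Set E → ℤ) (A : Set E) (P Q : Set (Set E)) : Prop :=
  Distinguishes A P Q ∧ ∀ C : Set E, Distinguishes C P Q → f A ≤ f C

variable {V : Type*}

/-- `P` is a partition of `E` into (possibly empty) classes indexed by `V`. -/
def IsPartitionFam (P : V → Set E) : Prop :=
  (∀ x y : V, x ≠ y → Disjoint (P x) (P y)) ∧ (⋃ x, P x) = Set.univ

/-- For an edge `tu` of the decomposition tree `G`, the side `S_t` of the
corresponding separation: the union of the parts over the component of
`G - tu` containing `t`. -/
def treeSide (G : SimpleGraph V) (P : V → Set E) (t u : V) : Set E :=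
  ⋃ x ∈ {x | (G.deleteEdges {s(t, u)}).Reachable t x}, P x

/-!
Recursion on a set `S` of maximal tangles. Take a separation `A` of minimal order among those
distinguishing two tangles of `S`. The boundary separations already placed around `S` efficiently
distinguish some pair of tangles, so by submodularity one of the corners of `A` with such a
boundary separation `B` is again of minimal order; replacing `A` by it makes `A` nested with `B`.
Now `A` splits `S` into the tangles in which `A` is small and those in which `Aᶜ` is small; trees
for the two halves, built recursively with `A` resp. `Aᶜ` as a further boundary separation, are
joined by an edge labelled `A`. Finally, a labelling of the oriented edges of a tree by
separations such that the sides facing any vertex are disjoint determines the parts of a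
tree-decomposition whose edge separations are exactly the labels.
-/

open SimpleGraph

namespace SimpleGraph

variable {W : Type*} {G H : SimpleGraph W} {S : Set W}

lemma Reachable.deleteEdges_or {t v : W} (h : G.Reachable v t) (u : W) :
    (G.deleteEdges {s(t, u)}).Reachable v t ∨ (G.deleteEdges {s(t, u)}).Reachable v u := by
  obtain ⟨p⟩ := h
  induction p with
  | nil => exact Or.inl .rfl
  | @cons v w t hvw q ih =>
    by_cases he : s(v, w) = s(t, u)
    · rcases Sym2.eq_iff.mp he with ⟨rfl, -⟩ | ⟨rfl, -⟩
      exacts [Or.inl .rfl, Or.inr .rfl]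
    · have hvw' : (G.deleteEdges {s(t, u)}).Adj v w := (deleteEdges_adj ..).mpr ⟨hvw, he⟩
      exact ih.imp hvw'.reachable.trans hvw'.reachable.trans

lemma Reachable.of_sup_of_mem (hG : ∀ ⦃a b⦄, G.Adj a b → a ∈ S)
    (hH : ∀ ⦃a b⦄, H.Adj a b → a ∉ S) {a b : W} (h : (G ⊔ H).Reachable a b) (ha : a ∈ S) :
    G.Reachable a b := by
  obtain ⟨p⟩ := h
  induction p with
  | nil => exact .rfl
  | cons hac q ih =>
    have hac : G.Adj _ _ := hac.resolve_right fun h => hH h ha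
    exact hac.reachable.trans (ih (hG hac.symm))

lemma IsAcyclic.isBridge_sup (hG : ∀ ⦃a b⦄, G.Adj a b → a ∈ S)
    (hH : ∀ ⦃a b⦄, H.Adj a b → a ∉ S) (hGa : G.IsAcyclic) {a b : W} (hab : G.Adj a b) :
    (G ⊔ H).IsBridge s(a, b) := fun hr => by
  rw [deleteEdges_sup] at hr
  exact isAcyclic_iff_forall_adj_isBridge.mp hGa hab <| Reachable.of_sup_of_mem
    (fun _ _ h => hG ((deleteEdges_adj ..).mp h).1)
    (fun _ _ h => hH ((deleteEdges_adj ..).mp h).1) hr (hG hab)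

lemma IsAcyclic.sup_of_disjoint (hG : ∀ ⦃a b⦄, G.Adj a b → a ∈ S)
    (hH : ∀ ⦃a b⦄, H.Adj a b → a ∉ S) (hGa : G.IsAcyclic) (hHa : H.IsAcyclic) :
    (G ⊔ H).IsAcyclic := by
  refine isAcyclic_iff_forall_adj_isBridge.mpr fun a b hab => hab.elim (hGa.isBridge_sup hG hH)
    fun hab => ?_
  rw [sup_comm]
  exact hHa.isBridge_sup (S := Sᶜ) hH (fun _ _ h => not_not.mpr (hG h)) hab

end SimpleGraph

section Labelling

variable {W : Type*} {G : SimpleGraph W} {sep : W → W → Set E}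

/-- `sep t u` is the side containing `t` of the separation of `E` belonging to the edge `tu`. -/
structure IsSepLabelling (G : SimpleGraph W) (sep : W → W → Set E) : Prop where
  compl_eq : ∀ ⦃t u⦄, G.Adj t u → sep u t = (sep t u)ᶜ
  disjoint : ∀ ⦃t u y⦄, G.Adj t u → G.Adj y u → t ≠ y → Disjoint (sep t u) (sep y u)

def sepPart (G : SimpleGraph W) (sep : W → W → Set E) (v : W) : Set E :=
  {x | ∀ w, G.Adj v w → x ∈ sep v w}

namespace IsSepLabelling

lemma subset_sep (h : IsSepLabelling G sep) {t u y : W} (htu : G.Adj t u) (huy : G.Adj u y)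
    (hty : t ≠ y) : sep t u ⊆ sep u y := by
  rw [h.compl_eq huy.symm]
  exact Set.subset_compl_iff_disjoint_right.mpr (h.disjoint htu huy.symm hty)

lemma sep_snd_subset (h : IsSepLabelling G sep) {v z : W} (p : G.Walk v z) (hp : p.IsPath)
    (hnil : ¬p.Nil) : sep v p.snd ⊆ sep p.penultimate z := by
  induction p with
  | nil => exact absurd Walk.Nil.nil hnil
  | @cons v c z hvc q ih =>
    by_cases hq : q.Nil
    · cases hq
      rfl
    · rw [Walk.snd_cons, Walk.penultimate_cons_of_not_nil _ _ hq]
      have hv : v ∉ q.support := ((Walk.cons_isPath_iff _ _).mp hp).2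
      refine (h.subset_sep hvc (q.adj_snd hq) ?_).trans (ih hp.of_cons hq)
      rintro rfl
      exact hv (List.mem_of_mem_tail (q.snd_mem_tail_support hq))

/-- Following, from any vertex, the edges whose far side contains `x` gives a path, which in a
finite forest must stop at a part containing `x`. -/
lemma exists_mem_sepPart [Fintype W] [Nonempty W] (h : IsSepLabelling G sep)
    (hG : G.IsAcyclic) (x : E) : ∃ v, x ∈ sepPart G sep v := by
  by_contra! hx
  have hpath : ∀ n : ℕ, ∃ (v u : W) (p : G.Walk v u), p.IsPath ∧ p.length = n ∧
      ∀ w ∈ p.support, G.Adj v w → x ∈ sep v w := by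
    intro n
    induction n with
    | zero =>
      obtain ⟨v⟩ := ‹Nonempty W›
      refine ⟨v, v, .nil, .nil, rfl, fun w hw hvw => ?_⟩
      rw [Walk.support_nil, List.mem_singleton] at hw
      exact absurd (hw ▸ hvw) (G.loopless.irrefl v)
    | succ n ih =>
      obtain ⟨v, u, p, hp, hlen, hpx⟩ := ih
      obtain ⟨y, hvy, hxy⟩ : ∃ y, G.Adj v y ∧ x ∉ sep v y := by simpa [sepPart] using hx v
      have hy : y ∉ p.support := fun hy => hxy (hpx y hy hvy)
      refine ⟨y, u, .cons hvy.symm p, hp.cons hy, by simp [hlen], fun w hw hyw => ?_⟩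
      obtain rfl : w = v := by simpa using hG.eq_snd_of_adj_start (hp.cons hy) hyw hw
      rw [h.compl_eq hvy]
      exact hxy
  obtain ⟨v, u, p, hp, hlen, -⟩ := hpath (Fintype.card W)
  exact hp.length_lt.ne hlen

lemma eq_of_mem_sepPart (h : IsSepLabelling G sep) (hG : G.Preconnected) {x : E} {v v' : W}
    (hv : x ∈ sepPart G sep v) (hv' : x ∈ sepPart G sep v') : v = v' := by
  by_contra hne
  obtain ⟨p, hp⟩ := (hG v v').exists_isPath
  have hnil : ¬p.Nil := Walk.not_nil_of_ne hne
  have hx := h.sep_snd_subset p hp hnil (hv _ (p.adj_snd hnil))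
  have hx' := hv' _ (p.adj_penultimate hnil).symm
  rw [h.compl_eq (p.adj_penultimate hnil)] at hx'
  exact hx' hx

lemma treeSide_subset (h : IsSepLabelling G sep) (hG : G.IsAcyclic) {t u : W}
    (htu : G.Adj t u) : treeSide G (sepPart G sep) t u ⊆ sep t u := by
  classical
  intro x hx
  simp only [treeSide, Set.mem_iUnion₂] at hx
  obtain ⟨v, hvt, hxv⟩ := hx
  obtain ⟨q, hq⟩ := hvt.symm.exists_isPath
  have hu : u ∉ q.support := fun hu => isBridge_iff.mp
    (isAcyclic_iff_forall_adj_isBridge.mp hG htu) ⟨(q.dropUntil u hu).reverse⟩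
  set r := (q.mapLe (deleteEdges_le _)).concat htu
  have hr : r.IsPath := (hq.mapLe _).concat (by rwa [Walk.support_mapLe_eq_support]) htu
  have hnil : ¬r.Nil := Walk.not_nil_of_ne fun hvu => hu (hvu ▸ q.start_mem_support)
  simpa [r, Walk.penultimate_concat] using h.sep_snd_subset r hr hnil (hxv _ (r.adj_snd hnil))

lemma treeSide_sepPart [Fintype W] (h : IsSepLabelling G sep) (hG : G.IsTree) {t u : W}
    (htu : G.Adj t u) : treeSide G (sepPart G sep) t u = sep t u := by
  refine (h.treeSide_subset hG.isAcyclic htu).antisymm fun x hx => ?_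
  have := hG.connected.nonempty
  obtain ⟨v, hxv⟩ := h.exists_mem_sepPart hG.isAcyclic x
  simp only [treeSide, Set.mem_iUnion₂]
  refine ⟨v, ?_, hxv⟩
  refine ((hG.connected v t).deleteEdges_or u).elim Reachable.symm fun hvu => absurd hx ?_
  have hxut : x ∈ treeSide G (sepPart G sep) u t := by
    simp only [treeSide, Set.mem_iUnion₂, Sym2.eq_swap (a := u)]
    exact ⟨v, hvu.symm, hxv⟩
  simpa [h.compl_eq htu] using h.treeSide_subset hG.isAcyclic htu.symm hxut

lemma isPartitionFam_sepPart [Fintype W] (h : IsSepLabelling G sep) (hG : G.IsTree) :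
    IsPartitionFam (sepPart G sep) := by
  have := hG.connected.nonempty
  refine ⟨fun v v' hne => Set.disjoint_left.mpr fun x hv hv' =>
    hne (h.eq_of_mem_sepPart hG.connected.preconnected hv hv'), ?_⟩
  exact Set.eq_univ_of_forall fun x => Set.mem_iUnion.mpr (h.exists_mem_sepPart hG.isAcyclic x)

end IsSepLabelling

end Labelling

section Tangles

variable {f : Set E → ℤ} {k l : ℤ} {T P Q : Set (Set E)} {A B C X : Set E}

namespace IsTangle

lemma le (hT : IsTangle f k T) (hA : A ∈ T) : f A ≤ k := hT.1 A hA

lemma mem_or_compl_mem (hT : IsTangle f k T) (hA : f A ≤ k) : A ∈ T ∨ Aᶜ ∈ T := hT.2.1 A hA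

lemma false_of_cover (hT : IsTangle f k T) {A₁ A₂ A₃ : Set E} (h₁ : A₁ ∈ T) (h₂ : A₂ ∈ T)
    (h₃ : A₃ ∈ T) (hcover : ∀ x, x ∈ A₁ ∨ x ∈ A₂ ∨ x ∈ A₃) : False :=
  hT.2.2.1 A₁ h₁ A₂ h₂ A₃ h₃ (Set.eq_univ_of_forall fun x => by
    rcases hcover x with hx | hx | hx <;> simp [hx])

lemma compl_notMem (hT : IsTangle f k T) (hA : A ∈ T) : Aᶜ ∉ T := fun hAc =>
  hT.false_of_cover hA hAc hA fun x => by by_cases hx : x ∈ A <;> simp [hx]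

lemma mem_of_subset (hT : IsTangle f k T) (hA : A ∈ T) (hBA : B ⊆ A) (hB : f B ≤ k) :
    B ∈ T :=
  (hT.mem_or_compl_mem hB).resolve_right fun hBc =>
    hT.false_of_cover hBc hA hA fun x => by
      by_cases hx : x ∈ B
      exacts [Or.inr (Or.inl (hBA hx)), Or.inl hx]

end IsTangle

lemma Distinguishes.symm (h : Distinguishes A P Q) : Distinguishes A Q P :=
  (Or.symm h).imp And.symm And.symm

lemma Distinguishes.le (hsym : FSymm f) (hP : IsTangle f k P) {D : Set E}
    (h : Distinguishes D P Q) : f D ≤ k := by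
  rcases h with ⟨hD, -⟩ | ⟨hD, -⟩
  exacts [hP.le hD, hsym D ▸ hP.le hD]

lemma IsTangle.subset_of_forall_not_distinguishes (hP : IsTangle f k P) (hQ : IsTangle f l Q)
    (hkl : k ≤ l) (h : ∀ D, ¬Distinguishes D P Q) : P ⊆ Q := fun A hA =>
  (hQ.mem_or_compl_mem ((hP.le hA).trans hkl)).resolve_right fun hAc => h A (Or.inl ⟨hA, hAc⟩)

lemma IsMaximalTangle.exists_distinguishes (hP : IsMaximalTangle f P) (hQ : IsMaximalTangle f Q)
    (hne : P ≠ Q) : ∃ D, Distinguishes D P Q := by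
  by_contra! h
  obtain ⟨k, hk⟩ := hP.1
  obtain ⟨l, hl⟩ := hQ.1
  rcases le_total k l with hkl | hlk
  · exact hne (hP.2 Q ⟨l, hl⟩ (hk.subset_of_forall_not_distinguishes hl hkl h)).symm
  · exact hne (hQ.2 P ⟨k, hk⟩
      (hl.subset_of_forall_not_distinguishes hk hlk fun D hD => h D hD.symm))

/-- The empty set is a tangle of order below the minimum of `f`, and tangles form a finite
family. -/
lemma exists_isMaximalTangle [Finite E] (f : Set E → ℤ) : ∃ T, IsMaximalTangle f T := by
  obtain ⟨X₀, -, hX₀⟩ := Set.exists_min_image Set.univ f (Set.toFinite _) ⟨∅, trivial⟩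
  have hempty : IsTangle f (f X₀ - 1) ∅ :=
    ⟨by simp, fun A hA => absurd (hX₀ A trivial) (by omega), by simp, by simp⟩
  obtain ⟨T, hT, hmax⟩ := Set.Finite.exists_maximalFor id {T | ∃ k, IsTangle f k T}
    (Set.toFinite _) ⟨∅, _, hempty⟩
  exact ⟨T, hT, fun T' hT' hsub => le_antisymm (hmax hT' hsub) hsub⟩

def SeparatesEff (f : Set E → ℤ) (A : Set E) (P Q : Set (Set E)) : Prop :=
  A ∈ P ∧ Aᶜ ∈ Q ∧ ∀ D, Distinguishes D P Q → f A ≤ f D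

def IsEffSeparation (f : Set E → ℤ) (B : Set E) : Prop :=
  ∃ P Q k l, IsTangle f k P ∧ IsTangle f l Q ∧ SeparatesEff f B P Q

namespace SeparatesEff

lemma distinguishes (h : SeparatesEff f A P Q) : Distinguishes A P Q := Or.inl ⟨h.1, h.2.1⟩

lemma distinguishesEff (h : SeparatesEff f A P Q) : DistinguishesEff f A P Q :=
  ⟨h.distinguishes, h.2.2⟩

lemma compl (hsym : FSymm f) (h : SeparatesEff f A P Q) : SeparatesEff f Aᶜ Q P :=
  ⟨h.2.1, by rw [compl_compl]; exact h.1, fun D hD => (hsym A).symm ▸ h.2.2 D hD.symm⟩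

lemma mem_of_subset_of_lt (hsym : FSymm f) (hP : IsTangle f k P) (hQ : IsTangle f l Q)
    (h : SeparatesEff f A P Q) (hXA : X ⊆ A) (hX : f X < f A) : X ∈ Q := by
  have hXP : X ∈ P := hP.mem_of_subset h.1 hXA (by linarith [hP.le h.1])
  have hAl : f A ≤ l := hsym A ▸ hQ.le h.2.1
  refine (hQ.mem_or_compl_mem (by linarith)).resolve_right fun hXc => ?_
  linarith [h.2.2 X (Or.inl ⟨hXP, hXc⟩)]

lemma union (hsym : FSymm f) (hP : IsTangle f k P) (hQ : IsTangle f l Q)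
    (hC : SeparatesEff f C P Q) (hBP : B ∈ P) (hle : f (C ∪ B) ≤ f C) :
    SeparatesEff f (C ∪ B) P Q := by
  have hCk := hP.le hC.1
  have hCl : f C ≤ l := hsym C ▸ hQ.le hC.2.1
  refine ⟨(hP.mem_or_compl_mem (by linarith)).resolve_right fun h => ?_,
    hQ.mem_of_subset hC.2.1 (Set.compl_subset_compl.mpr Set.subset_union_left)
      (by rw [← hsym]; linarith), fun D hD => hle.trans (hC.2.2 D hD)⟩
  exact hP.false_of_cover hC.1 hBP h fun x => by
    by_cases hxC : x ∈ C <;> by_cases hxB : x ∈ B <;> simp [hxC, hxB]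

lemma diff (hsym : FSymm f) (hP : IsTangle f k P) (hQ : IsTangle f l Q)
    (hC : SeparatesEff f C P Q) (hBQ : B ∈ Q) (hle : f (C \ B) ≤ f C) :
    SeparatesEff f (C \ B) P Q := by
  have hcompl : (Cᶜ ∪ B)ᶜ = C \ B := by rw [Set.compl_union, compl_compl, Set.sdiff_eq]
  have h := (hC.compl hsym).union hsym hQ hP hBQ (by rwa [hsym (Cᶜ ∪ B), ← hsym C, hcompl])
  simpa only [hcompl] using h.compl hsym

end SeparatesEff

lemma IsEffSeparation.compl (hsym : FSymm f) (h : IsEffSeparation f A) :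
    IsEffSeparation f Aᶜ :=
  let ⟨P, Q, k, l, hP, hQ, hA⟩ := h
  ⟨Q, P, l, k, hQ, hP, hA.compl hsym⟩

/-- Otherwise submodularity makes both `C ∩ B` and `B \ C` of order less than `f B`, so the
tangle in which `Bᶜ` is small contains both, and the three cover `E`. -/
lemma IsEffSeparation.corner_le (hsym : FSymm f) (hsub : FSubmod f) (hB : IsEffSeparation f B) :
    f (C ∪ B) ≤ f C ∨ f (C \ B) ≤ f C := by
  obtain ⟨P, Q, k, l, hP, hQ, hBPQ⟩ := hB
  by_contra! hlt
  have h₁ : f (C ∩ B) < f B := by linarith [hsub C B]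
  have h₂ : f (B \ C) < f B := by
    have hunion : (C ∪ Bᶜ)ᶜ = B \ C := by
      rw [Set.compl_union, compl_compl, Set.sdiff_eq, Set.inter_comm]
    have := hsub C Bᶜ
    rw [← Set.sdiff_eq, hsym (C ∪ Bᶜ), hunion, ← hsym B] at this
    linarith
  refine hQ.false_of_cover hBPQ.2.1
    (hBPQ.mem_of_subset_of_lt hsym hP hQ Set.inter_subset_right h₁)
    (hBPQ.mem_of_subset_of_lt hsym hP hQ Set.sdiff_subset h₂) fun x => ?_
  by_cases hxB : x ∈ B <;> by_cases hxC : x ∈ C <;> simp [hxB, hxC]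

lemma SeparatesEff.exists_uncross (hsym : FSymm f) (hsub : FSubmod f) (hP : IsTangle f k P)
    (hQ : IsTangle f l Q) (hC : SeparatesEff f C P Q) (hBP : B ∈ P) (hBQ : B ∈ Q)
    (hB : IsEffSeparation f B) :
    ∃ C', SeparatesEff f C' P Q ∧ (B ⊆ C' ∨ B ⊆ C'ᶜ) ∧
      ∀ X, Disjoint X B → (X ⊆ C ∨ X ⊆ Cᶜ) → X ⊆ C' ∨ X ⊆ C'ᶜ := by
  rcases hB.corner_le hsym hsub (C := C) with hle | hle
  · refine ⟨C ∪ B, hC.union hsym hP hQ hBP hle, Or.inl Set.subset_union_right,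
      fun X hXB hX => ?_⟩
    rw [Set.compl_union]
    exact hX.imp (fun h => h.trans Set.subset_union_left)
      fun h => Set.subset_inter h (Set.subset_compl_iff_disjoint_right.mpr hXB)
  · refine ⟨C \ B, hC.diff hsym hP hQ hBQ hle, Or.inr ?_, fun X hXB hX => ?_⟩
    · rw [Set.compl_sdiff]
      exact Set.subset_union_left
    · rw [Set.compl_sdiff]
      exact hX.imp (fun h => Set.subset_sdiff.mpr ⟨h, hXB⟩)
        fun h => h.trans Set.subset_union_right

lemma SeparatesEff.exists_nested (hsym : FSymm f) (hsub : FSubmod f) (hP : IsTangle f k P)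
    (hQ : IsTangle f l Q) {ℬ : Finset (Set E)}
    (hℬ : ∀ B ∈ ℬ, B ∈ P ∧ B ∈ Q ∧ IsEffSeparation f B)
    (hdisj : (ℬ : Set (Set E)).PairwiseDisjoint id) (hC : SeparatesEff f C P Q) :
    ∃ A, SeparatesEff f A P Q ∧ ∀ B ∈ ℬ, B ⊆ A ∨ B ⊆ Aᶜ := by
  classical
  induction ℬ using Finset.induction_on with
  | empty => exact ⟨C, hC, by simp⟩
  | insert B₀ ℬ hB₀ ih =>
    obtain ⟨A₁, hA₁, hnested⟩ := ih (fun B hB => hℬ B (Finset.mem_insert_of_mem hB))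
      (hdisj.subset (by simp))
    obtain ⟨hB₀P, hB₀Q, hB₀eff⟩ := hℬ B₀ (Finset.mem_insert_self _ _)
    obtain ⟨A, hA, hB₀A, hpres⟩ := hA₁.exists_uncross hsym hsub hP hQ hB₀P hB₀Q hB₀eff
    refine ⟨A, hA, fun B hB => ?_⟩
    rcases Finset.mem_insert.mp hB with rfl | hB
    · exact hB₀A
    · exact hpres B (hdisj (by simp [hB]) (by simp) (ne_of_mem_of_not_mem hB hB₀))
        (hnested B hB)

end Tangles

section

variable {W : Type*} {f : Set E → ℤ} {τ : W → Set (Set E)}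

/-- The vertices of the tree are the indices of the tangles in `S`, and `τ u` lives at `u`; a
boundary piece `B ∈ ℬ` lies in the part at `home B`. -/
structure TangleTree (f : Set E → ℤ) (τ : W → Set (Set E)) (S : Finset W)
    (ℬ : Finset (Set E)) where
  G : SimpleGraph W
  sep : W → W → Set E
  home : Set E → W
  mem_of_adj : ∀ ⦃t u⦄, G.Adj t u → t ∈ S
  reachable : ∀ t ∈ S, ∀ u ∈ S, G.Reachable t u
  isAcyclic : G.IsAcyclic
  isSepLabelling : IsSepLabelling G sep
  home_mem : ∀ B ∈ ℬ, home B ∈ S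
  disjoint_home : ∀ B ∈ ℬ, ∀ ⦃t⦄, G.Adj t (home B) → Disjoint B (sep t (home B))
  sep_mem : ∀ ⦃t u⦄, G.Adj t u → sep t u ∈ τ u
  distinguishesEff : ∀ p ∈ S, ∀ q ∈ S, p ≠ q →
    ∃ t u, G.Adj t u ∧ DistinguishesEff f (sep t u) (τ p) (τ q)

namespace TangleTree

variable {S : Finset W} {ℬ : Finset (Set E)}

def single (t₀ : W) (ℬ : Finset (Set E)) : TangleTree f τ {t₀} ℬ where
  G := ⊥
  sep _ _ := ∅
  home _ := t₀
  mem_of_adj := by simp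
  reachable := by simp
  isAcyclic := isAcyclic_bot
  isSepLabelling := ⟨by simp, by simp⟩
  home_mem := by simp
  disjoint_home := by simp
  sep_mem := by simp
  distinguishesEff := by simp

lemma mem_of_adj' (T : TangleTree f τ S ℬ) {t u : W} (h : T.G.Adj t u) : u ∈ S :=
  T.mem_of_adj h.symm

section Glue

variable {S₁ S₂ : Finset W} {ℬ₁ ℬ₂ : Finset (Set E)} {A : Set E}
  (T₁ : TangleTree f τ S₁ (insert A ℬ₁)) (T₂ : TangleTree f τ S₂ (insert Aᶜ ℬ₂))

def glueGraph : SimpleGraph W := T₁.G ⊔ T₂.G ⊔ edge (T₁.home A) (T₂.home Aᶜ)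

open Classical in
def glueSep (a b : W) : Set E :=
  if a ∈ S₁ then (if b ∈ S₁ then T₁.sep a b else Aᶜ) else (if b ∈ S₂ then T₂.sep a b else A)

open Classical in
noncomputable def glueHome (B : Set E) : W := if B ∈ ℬ₁ then T₁.home B else T₂.home B

variable {T₁ T₂}

lemma home_mem_left : T₁.home A ∈ S₁ := T₁.home_mem A (Finset.mem_insert_self _ _)

lemma home_mem_right : T₂.home Aᶜ ∈ S₂ := T₂.home_mem Aᶜ (Finset.mem_insert_self _ _)

lemma home_ne_home (hS : Disjoint S₁ S₂) : T₁.home A ≠ T₂.home Aᶜ := fun h =>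
  Finset.disjoint_left.mp hS home_mem_left (h ▸ home_mem_right)

lemma glueGraph_adj_home (hS : Disjoint S₁ S₂) : (glueGraph T₁ T₂).Adj (T₁.home A) (T₂.home Aᶜ) :=
  Or.inr ((edge_adj ..).mpr ⟨Or.inl ⟨rfl, rfl⟩, home_ne_home hS⟩)

lemma glueGraph_adj_of_mem_left (hS : Disjoint S₁ S₂) {t u : W} (hu : u ∈ S₁)
    (h : (glueGraph T₁ T₂).Adj t u) :
    T₁.G.Adj t u ∨ (t = T₂.home Aᶜ ∧ u = T₁.home A) := by
  rcases h with (h | h) | h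
  · exact Or.inl h
  · exact absurd (T₂.mem_of_adj' h) (Finset.disjoint_left.mp hS hu)
  · rcases ((edge_adj ..).mp h).1 with ⟨-, rfl⟩ | h
    · exact absurd home_mem_right (Finset.disjoint_left.mp hS hu)
    · exact Or.inr h

lemma glueGraph_adj_of_mem_right (hS : Disjoint S₁ S₂) {t u : W} (hu : u ∈ S₂)
    (h : (glueGraph T₁ T₂).Adj t u) :
    T₂.G.Adj t u ∨ (t = T₁.home A ∧ u = T₂.home Aᶜ) := by
  rcases h with (h | h) | h
  · exact absurd (T₁.mem_of_adj' h) (Finset.disjoint_right.mp hS hu)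
  · exact Or.inl h
  · rcases ((edge_adj ..).mp h).1 with h | ⟨-, rfl⟩
    · exact Or.inr h
    · exact absurd home_mem_left (Finset.disjoint_right.mp hS hu)

lemma glueSep_of_adj_left {a b : W} (h : T₁.G.Adj a b) : glueSep T₁ T₂ a b = T₁.sep a b := by
  simp [glueSep, T₁.mem_of_adj h, T₁.mem_of_adj' h]

lemma glueSep_of_adj_right (hS : Disjoint S₁ S₂) {a b : W} (h : T₂.G.Adj a b) :
    glueSep T₁ T₂ a b = T₂.sep a b := by
  have ha := T₂.mem_of_adj h
  have hb := T₂.mem_of_adj' h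
  simp [glueSep, Finset.disjoint_right.mp hS ha, hb]

lemma glueSep_home_home (hS : Disjoint S₁ S₂) : glueSep T₁ T₂ (T₁.home A) (T₂.home Aᶜ) = Aᶜ := by
  simp [glueSep, home_mem_left, Finset.disjoint_right.mp hS home_mem_right]

lemma glueSep_home_home' (hS : Disjoint S₁ S₂) : glueSep T₁ T₂ (T₂.home Aᶜ) (T₁.home A) = A := by
  simp [glueSep, Finset.disjoint_right.mp hS home_mem_right,
    Finset.disjoint_left.mp hS home_mem_left]

open Classical in
lemma glueGraph_mem_of_adj {t u : W} (h : (glueGraph T₁ T₂).Adj t u) : t ∈ S₁ ∪ S₂ := by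
  rcases h with (h | h) | h
  · exact Finset.mem_union_left _ (T₁.mem_of_adj h)
  · exact Finset.mem_union_right _ (T₂.mem_of_adj h)
  · rcases ((edge_adj ..).mp h).1 with ⟨rfl, -⟩ | ⟨rfl, -⟩
    exacts [Finset.mem_union_left _ home_mem_left, Finset.mem_union_right _ home_mem_right]

open Classical in
lemma glueGraph_reachable (hS : Disjoint S₁ S₂) :
    ∀ t ∈ S₁ ∪ S₂, ∀ u ∈ S₁ ∪ S₂, (glueGraph T₁ T₂).Reachable t u := by
  have h₁ : ∀ t ∈ S₁, ∀ u ∈ S₁, (glueGraph T₁ T₂).Reachable t u := fun t ht u hu =>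
    (T₁.reachable t ht u hu).mono (le_sup_left.trans le_sup_left)
  have h₂ : ∀ t ∈ S₂, ∀ u ∈ S₂, (glueGraph T₁ T₂).Reachable t u := fun t ht u hu =>
    (T₂.reachable t ht u hu).mono (le_sup_right.trans le_sup_left)
  have hbr := (glueGraph_adj_home (T₁ := T₁) (T₂ := T₂) hS).reachable
  intro t ht u hu
  rcases Finset.mem_union.mp ht with ht | ht <;> rcases Finset.mem_union.mp hu with hu | hu
  · exact h₁ t ht u hu
  · exact (h₁ t ht _ home_mem_left).trans (hbr.trans (h₂ _ home_mem_right u hu))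
  · exact (h₂ t ht _ home_mem_right).trans (hbr.symm.trans (h₁ _ home_mem_left u hu))
  · exact h₂ t ht u hu

lemma glueGraph_isAcyclic (hS : Disjoint S₁ S₂) : (glueGraph T₁ T₂).IsAcyclic := by
  have hright : ∀ ⦃a b⦄, T₂.G.Adj a b → a ∉ (S₁ : Set W) := fun _ _ h =>
    Finset.disjoint_right.mp hS (T₂.mem_of_adj h)
  refine (T₁.isAcyclic.sup_of_disjoint (S := S₁) T₁.mem_of_adj hright T₂.isAcyclic)
    |>.sup_edge_of_not_reachable fun hr => ?_
  obtain ⟨p⟩ := hr.of_sup_of_mem (S := S₁) T₁.mem_of_adj hright home_mem_left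
  have hnil : ¬p.Nil := Walk.not_nil_of_ne (home_ne_home hS)
  exact Finset.disjoint_left.mp hS (T₁.mem_of_adj' (p.adj_penultimate hnil)) home_mem_right

lemma glueSep_compl (hS : Disjoint S₁ S₂) {t u : W} (h : (glueGraph T₁ T₂).Adj t u) :
    glueSep T₁ T₂ u t = (glueSep T₁ T₂ t u)ᶜ := by
  classical
  rcases Finset.mem_union.mp (glueGraph_mem_of_adj h.symm) with hu | hu
  · rcases glueGraph_adj_of_mem_left hS hu h with h | ⟨rfl, rfl⟩
    · rw [glueSep_of_adj_left h, glueSep_of_adj_left h.symm, T₁.isSepLabelling.compl_eq h]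
    · rw [glueSep_home_home hS, glueSep_home_home' hS]
  · rcases glueGraph_adj_of_mem_right hS hu h with h | ⟨rfl, rfl⟩
    · rw [glueSep_of_adj_right hS h, glueSep_of_adj_right hS h.symm,
        T₂.isSepLabelling.compl_eq h]
    · rw [glueSep_home_home hS, glueSep_home_home' hS, compl_compl]

/-- At a vertex of `S₁` the sides facing it are those of the first tree, together with `A` at the
home of `A`, which is disjoint from them. -/
lemma disjoint_glueSep (hS : Disjoint S₁ S₂) {t u y : W} (ht : (glueGraph T₁ T₂).Adj t u)
    (hy : (glueGraph T₁ T₂).Adj y u) (hty : t ≠ y) :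
    Disjoint (glueSep T₁ T₂ t u) (glueSep T₁ T₂ y u) := by
  classical
  have hA₁ := T₁.disjoint_home A (Finset.mem_insert_self _ _)
  have hA₂ := T₂.disjoint_home Aᶜ (Finset.mem_insert_self _ _)
  rcases Finset.mem_union.mp (glueGraph_mem_of_adj ht.symm) with hu | hu
  · rcases glueGraph_adj_of_mem_left hS hu ht with ht | ⟨rfl, rfl⟩
    · rcases glueGraph_adj_of_mem_left hS hu hy with hy | ⟨rfl, rfl⟩
      · rw [glueSep_of_adj_left ht, glueSep_of_adj_left hy]
        exact T₁.isSepLabelling.disjoint ht hy hty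
      · rw [glueSep_of_adj_left ht, glueSep_home_home' hS]
        exact (hA₁ ht).symm
    · rcases glueGraph_adj_of_mem_left hS hu hy with hy | ⟨rfl, -⟩
      · rw [glueSep_of_adj_left hy, glueSep_home_home' hS]
        exact hA₁ hy
      · exact absurd rfl hty
  · rcases glueGraph_adj_of_mem_right hS hu ht with ht | ⟨rfl, rfl⟩
    · rcases glueGraph_adj_of_mem_right hS hu hy with hy | ⟨rfl, rfl⟩
      · rw [glueSep_of_adj_right hS ht, glueSep_of_adj_right hS hy]
        exact T₂.isSepLabelling.disjoint ht hy hty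
      · rw [glueSep_of_adj_right hS ht, glueSep_home_home hS]
        exact (hA₂ ht).symm
    · rcases glueGraph_adj_of_mem_right hS hu hy with hy | ⟨rfl, -⟩
      · rw [glueSep_of_adj_right hS hy, glueSep_home_home hS]
        exact hA₂ hy
      · exact absurd rfl hty

lemma disjoint_glueHome (hS : Disjoint S₁ S₂) (hℬ₁ : ∀ B ∈ ℬ₁, Disjoint B A)
    (hℬ₂ : ∀ B ∈ ℬ₂, Disjoint B Aᶜ) {B : Set E} (hB : B ∈ ℬ₁ ∨ B ∈ ℬ₂) {t : W}
    (ht : (glueGraph T₁ T₂).Adj t (glueHome T₁ T₂ B)) :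
    Disjoint B (glueSep T₁ T₂ t (glueHome T₁ T₂ B)) := by
  by_cases hB₁ : B ∈ ℬ₁
  · have hB : B ∈ insert A ℬ₁ := Finset.mem_insert_of_mem hB₁
    rw [glueHome, if_pos hB₁] at ht ⊢
    rcases glueGraph_adj_of_mem_left hS (T₁.home_mem B hB) ht with ht | ⟨rfl, hhome⟩
    · rw [glueSep_of_adj_left ht]
      exact T₁.disjoint_home B hB ht
    · rw [hhome, glueSep_home_home' hS]
      exact hℬ₁ B hB₁
  · have hB₂ := hB.resolve_left hB₁
    have hB : B ∈ insert Aᶜ ℬ₂ := Finset.mem_insert_of_mem hB₂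
    rw [glueHome, if_neg hB₁] at ht ⊢
    rcases glueGraph_adj_of_mem_right hS (T₂.home_mem B hB) ht with ht | ⟨rfl, hhome⟩
    · rw [glueSep_of_adj_right hS ht]
      exact T₂.disjoint_home B hB ht
    · rw [hhome, glueSep_home_home hS]
      exact hℬ₂ B hB₂

lemma glueSep_mem (hS : Disjoint S₁ S₂) (hsep : ∀ p ∈ S₁, ∀ q ∈ S₂, SeparatesEff f A (τ p) (τ q))
    {t u : W} (h : (glueGraph T₁ T₂).Adj t u) : glueSep T₁ T₂ t u ∈ τ u := by
  classical
  have hA := hsep _ (home_mem_left (T₁ := T₁)) _ (home_mem_right (T₂ := T₂))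
  rcases Finset.mem_union.mp (glueGraph_mem_of_adj h.symm) with hu | hu
  · rcases glueGraph_adj_of_mem_left hS hu h with h | ⟨rfl, rfl⟩
    · rw [glueSep_of_adj_left h]
      exact T₁.sep_mem h
    · rw [glueSep_home_home' hS]
      exact hA.1
  · rcases glueGraph_adj_of_mem_right hS hu h with h | ⟨rfl, rfl⟩
    · rw [glueSep_of_adj_right hS h]
      exact T₂.sep_mem h
    · rw [glueSep_home_home hS]
      exact hA.2.1

open Classical in
lemma glue_distinguishesEff (hsym : FSymm f) (hS : Disjoint S₁ S₂)
    (hsep : ∀ p ∈ S₁, ∀ q ∈ S₂, SeparatesEff f A (τ p) (τ q)) :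
    ∀ p ∈ S₁ ∪ S₂, ∀ q ∈ S₁ ∪ S₂, p ≠ q → ∃ t u, (glueGraph T₁ T₂).Adj t u ∧
      DistinguishesEff f (glueSep T₁ T₂ t u) (τ p) (τ q) := by
  intro p hp q hq hpq
  rcases Finset.mem_union.mp hp with hp | hp <;> rcases Finset.mem_union.mp hq with hq | hq
  · obtain ⟨t, u, h, hd⟩ := T₁.distinguishesEff p hp q hq hpq
    exact ⟨t, u, Or.inl (Or.inl h), by rwa [glueSep_of_adj_left h]⟩
  · refine ⟨_, _, (glueGraph_adj_home hS).symm, ?_⟩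
    rw [glueSep_home_home' hS]
    exact (hsep p hp q hq).distinguishesEff
  · refine ⟨_, _, glueGraph_adj_home hS, ?_⟩
    rw [glueSep_home_home hS]
    exact ((hsep q hq p hp).compl hsym).distinguishesEff
  · obtain ⟨t, u, h, hd⟩ := T₂.distinguishesEff p hp q hq hpq
    exact ⟨t, u, Or.inl (Or.inr h), by rwa [glueSep_of_adj_right hS h]⟩

open Classical in
lemma glueHome_mem {B : Set E} (hB : B ∈ ℬ₁ ∨ B ∈ ℬ₂) : glueHome T₁ T₂ B ∈ S₁ ∪ S₂ := by
  unfold glueHome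
  split_ifs with hB₁
  · exact Finset.mem_union_left _ (T₁.home_mem B (Finset.mem_insert_of_mem hB₁))
  · exact Finset.mem_union_right _
      (T₂.home_mem B (Finset.mem_insert_of_mem (hB.resolve_left hB₁)))

variable (T₁ T₂) in
open Classical in
noncomputable def glue (hsym : FSymm f) (hS : Disjoint S₁ S₂)
    (hsep : ∀ p ∈ S₁, ∀ q ∈ S₂, SeparatesEff f A (τ p) (τ q))
    (hℬ₁ : ∀ B ∈ ℬ₁, Disjoint B A) (hℬ₂ : ∀ B ∈ ℬ₂, Disjoint B Aᶜ) :
    TangleTree f τ (S₁ ∪ S₂) (ℬ₁ ∪ ℬ₂) where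
  G := glueGraph T₁ T₂
  sep := glueSep T₁ T₂
  home := glueHome T₁ T₂
  mem_of_adj _ _ := glueGraph_mem_of_adj
  reachable := glueGraph_reachable hS
  isAcyclic := glueGraph_isAcyclic hS
  isSepLabelling := ⟨fun _ _ => glueSep_compl hS, fun _ _ _ => disjoint_glueSep hS⟩
  home_mem _ hB := glueHome_mem (Finset.mem_union.mp hB)
  disjoint_home _ hB _ := disjoint_glueHome hS hℬ₁ hℬ₂ (Finset.mem_union.mp hB)
  sep_mem _ _ := glueSep_mem hS hsep
  distinguishesEff := glue_distinguishesEff hsym hS hsep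

end Glue

end TangleTree

end

section Recursion

variable {W : Type*} {f : Set E → ℤ} {τ : W → Set (Set E)} {S : Finset W}
  {ℬ : Finset (Set E)} {A : Set E}

/-- The separations along which the tree for the tangles of `S` gets attached to the rest of the
tree. -/
def IsBoundaryFamily (f : Set E → ℤ) (τ : W → Set (Set E)) (S : Finset W)
    (ℬ : Finset (Set E)) : Prop :=
  (∀ B ∈ ℬ, (∀ i ∈ S, B ∈ τ i) ∧ IsEffSeparation f B) ∧ (ℬ : Set (Set E)).PairwiseDisjoint id

lemma IsBoundaryFamily.insert (h : IsBoundaryFamily f τ S ℬ) {S' : Finset W} (hS' : S' ⊆ S)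
    {ℬ' : Finset (Set E)} (hℬ' : ℬ' ⊆ ℬ) (hAS : ∀ i ∈ S', A ∈ τ i) (hA : IsEffSeparation f A)
    (hAℬ : ∀ B ∈ ℬ', Disjoint A B) : IsBoundaryFamily f τ S' (insert A ℬ') := by
  refine ⟨fun B hB => ?_, ?_⟩
  · rcases Finset.mem_insert.mp hB with rfl | hB
    · exact ⟨hAS, hA⟩
    · exact ⟨fun i hi => (h.1 B (hℬ' hB)).1 i (hS' hi), (h.1 B (hℬ' hB)).2⟩
  · rw [Finset.coe_insert, Set.pairwiseDisjoint_insert]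
    exact ⟨h.2.subset (Finset.coe_subset.mpr hℬ'), fun B hB _ => hAℬ B hB⟩

lemma exists_minimal_separatesEff_nested [Finite E] (hsym : FSymm f) (hsub : FSubmod f)
    (hτ : ∀ i, IsMaximalTangle f (τ i)) (hτinj : Function.Injective τ) (hS : 1 < S.card)
    (hℬ : IsBoundaryFamily f τ S ℬ) :
    ∃ p ∈ S, ∃ q ∈ S, ∃ A, SeparatesEff f A (τ p) (τ q) ∧
      (∀ p' ∈ S, ∀ q' ∈ S, ∀ D, Distinguishes D (τ p') (τ q') → f A ≤ f D) ∧
      ∀ B ∈ ℬ, B ⊆ A ∨ B ⊆ Aᶜ := by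
  obtain ⟨p', hp', q', hq', hne⟩ := Finset.one_lt_card.mp hS
  obtain ⟨D₀, hD₀⟩ := (hτ p').exists_distinguishes (hτ q') (hτinj.ne hne)
  obtain ⟨C, ⟨p, hp, q, hq, hC⟩, hmin⟩ :=
    Set.exists_min_image {D | ∃ p ∈ S, ∃ q ∈ S, Distinguishes D (τ p) (τ q)} f (Set.toFinite _)
      ⟨D₀, p', hp', q', hq', hD₀⟩
  wlog hCpq : C ∈ τ p ∧ Cᶜ ∈ τ q generalizing p q
  · have h := hC.resolve_left hCpq
    exact this q hq p hp hC.symm ⟨h.2, h.1⟩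
  obtain ⟨k, hk⟩ := (hτ p).1
  obtain ⟨l, hl⟩ := (hτ q).1
  have hCeff : SeparatesEff f C (τ p) (τ q) :=
    ⟨hCpq.1, hCpq.2, fun D hD => hmin D ⟨p, hp, q, hq, hD⟩⟩
  obtain ⟨A, hA, hnested⟩ := hCeff.exists_nested hsym hsub hk hl
    (fun B hB => ⟨(hℬ.1 B hB).1 p hp, (hℬ.1 B hB).1 q hq, (hℬ.1 B hB).2⟩) hℬ.2
  exact ⟨p, hp, q, hq, A, hA, fun p' hp' q' hq' D hD =>
    (hA.2.2 C hCeff.distinguishes).trans (hmin D ⟨p', hp', q', hq', hD⟩), hnested⟩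

open Classical in
/-- Every tangle of `S` orients `A`, since its order exceeds that of a separation distinguishing
it from another tangle of `S`. -/
lemma separatesEff_of_mem_filter (hsym : FSymm f) (hτ : ∀ i, IsMaximalTangle f (τ i))
    (hτinj : Function.Injective τ) (hS : 1 < S.card)
    (hA : ∀ p ∈ S, ∀ q ∈ S, ∀ D, Distinguishes D (τ p) (τ q) → f A ≤ f D) :
    ∀ p ∈ S.filter (A ∈ τ ·), ∀ q ∈ S.filter (A ∉ τ ·), SeparatesEff f A (τ p) (τ q) := by
  intro p hp q hq
  obtain ⟨hpS, hpA⟩ := Finset.mem_filter.mp hp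
  obtain ⟨hqS, hqA⟩ := Finset.mem_filter.mp hq
  obtain ⟨q', hq', hne⟩ := Finset.exists_mem_ne hS q
  obtain ⟨D, hD⟩ := (hτ q).exists_distinguishes (hτ q') (hτinj.ne hne.symm)
  obtain ⟨k, hk⟩ := (hτ q).1
  exact ⟨hpA, (hk.mem_or_compl_mem ((hA q hqS q' hq' D hD).trans (hD.le hsym hk))).resolve_left
    hqA, hA p hpS q hqS⟩

theorem TangleTree.nonempty [Finite E] (hsym : FSymm f) (hsub : FSubmod f)
    (hτ : ∀ i, IsMaximalTangle f (τ i)) (hτinj : Function.Injective τ) (hS : S.Nonempty)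
    (hℬ : IsBoundaryFamily f τ S ℬ) : Nonempty (TangleTree f τ S ℬ) := by
  classical
  induction S using Finset.strongInduction generalizing ℬ with
  | H S ih =>
  rcases le_or_gt S.card 1 with hcard | hcard
  · obtain ⟨t₀, rfl⟩ := Finset.card_eq_one.mp (le_antisymm hcard hS.card_pos)
    exact ⟨TangleTree.single t₀ ℬ⟩
  obtain ⟨p, hp, q, hq, A, hA, hmin, hnested⟩ :=
    exists_minimal_separatesEff_nested hsym hsub hτ hτinj hcard hℬ
  obtain ⟨k, hk⟩ := (hτ p).1
  obtain ⟨l, hl⟩ := (hτ q).1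
  have hAeff : IsEffSeparation f A := ⟨_, _, _, _, hk, hl, hA⟩
  have hsep := separatesEff_of_mem_filter hsym hτ hτinj hcard hmin
  have hp₁ : p ∈ S.filter (A ∈ τ ·) := Finset.mem_filter.mpr ⟨hp, hA.1⟩
  have hqA : A ∉ τ q := fun h => hl.compl_notMem h hA.2.1
  have hℬ₁ : ∀ B ∈ ℬ.filter (Disjoint · A), Disjoint B A := fun B hB =>
    (Finset.mem_filter.mp hB).2
  have hℬ₂ : ∀ B ∈ ℬ.filter (¬Disjoint · A), Disjoint B Aᶜ := fun B hB =>
    ((hnested B (Finset.mem_filter.mp hB).1).resolve_right fun h =>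
      (Finset.mem_filter.mp hB).2 (Set.subset_compl_iff_disjoint_right.mp h)) |>
      Set.disjoint_compl_right_iff_subset.mpr
  obtain ⟨T₁⟩ := ih _ (Finset.filter_ssubset.mpr ⟨q, hq, hqA⟩) ⟨p, hp₁⟩
    (hℬ.insert (Finset.filter_subset _ _) (Finset.filter_subset _ _)
      (fun t ht => (Finset.mem_filter.mp ht).2) hAeff fun B hB => (hℬ₁ B hB).symm)
  obtain ⟨T₂⟩ := ih _ (Finset.filter_ssubset.mpr ⟨p, hp, not_not.mpr hA.1⟩)
    ⟨q, Finset.mem_filter.mpr ⟨hq, hqA⟩⟩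
    (hℬ.insert (Finset.filter_subset _ _) (Finset.filter_subset _ _)
      (fun t ht => (hsep p hp₁ t ht).2.1) (hAeff.compl hsym) fun B hB => (hℬ₂ B hB).symm)
  rw [← Finset.filter_union_filter_not_eq (A ∈ τ ·) S,
    ← Finset.filter_union_filter_not_eq (Disjoint · A) ℬ]
  exact ⟨T₁.glue T₂ hsym (Finset.disjoint_filter_filter_not _ _ _) hsep hℬ₁ hℬ₂⟩

end Recursion

/-- There is a tree-decomposition distinguishing any two (distinct) maximal
tangles efficiently such that in each of its parts lives a maximal tangle:
for every vertex `t` there is a maximal tangle orienting every separation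
corresponding to an edge at `t` towards the `t`-side. -/
theorem stmt_19 [Fintype E] (f : Set E → ℤ) (hsym : FSymm f) (hsub : FSubmod f) :
    ∃ (V : Type) (_ : Fintype V) (G : SimpleGraph V) (P : V → Set E),
      G.IsTree ∧ IsPartitionFam P ∧
      (∀ P' Q : Set (Set E), IsMaximalTangle f P' → IsMaximalTangle f Q →
        P' ≠ Q → ∃ t u, G.Adj t u ∧ DistinguishesEff f (treeSide G P t u) P' Q) ∧
      (∀ t : V, ∃ Q : Set (Set E), IsMaximalTangle f Q ∧
        ∀ u : V, G.Adj t u → treeSide G P u t ∈ Q) := by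
  let e := Finite.equivFin {T : Set (Set E) // IsMaximalTangle f T}
  obtain ⟨T₀, hT₀⟩ := exists_isMaximalTangle f
  have : Nonempty (Fin (Nat.card {T : Set (Set E) // IsMaximalTangle f T})) := ⟨e ⟨T₀, hT₀⟩⟩
  obtain ⟨T⟩ := TangleTree.nonempty (ℬ := ∅) hsym hsub (fun i => (e.symm i).2)
    (Subtype.val_injective.comp e.symm.injective) Finset.univ_nonempty ⟨by simp, by simp⟩
  have hG : T.G.IsTree :=
    ⟨⟨fun t u => T.reachable t (Finset.mem_univ _) u (Finset.mem_univ _)⟩, T.isAcyclic⟩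
  have hside : ∀ ⦃t u⦄, T.G.Adj t u → treeSide T.G (sepPart T.G T.sep) t u = T.sep t u :=
    fun _ _ => T.isSepLabelling.treeSide_sepPart hG
  refine ⟨_, inferInstance, T.G, sepPart T.G T.sep, hG, T.isSepLabelling.isPartitionFam_sepPart hG,
    fun P Q hP hQ hne => ?_, fun t => ⟨_, (e.symm t).2, fun u h => ?_⟩⟩
  · obtain ⟨t, u, h, hd⟩ := T.distinguishesEff _ (Finset.mem_univ (e ⟨P, hP⟩)) _
      (Finset.mem_univ (e ⟨Q, hQ⟩)) fun h => hne (by simpa using h)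
    rw [e.symm_apply_apply, e.symm_apply_apply] at hd
    exact ⟨t, u, h, hside h ▸ hd⟩
  · rw [hside h.symm]
    exact T.sep_mem h.symm
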